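/- arXiv:2006.10344 — 3 statements merged into one kernel-verified Lean document; each statement's English description precedes it below -/
import Mathlib

section
/- Let p be a prime with p ≡ 1 (mod 4). Then the fundamental unit ε_p of the real quadratic field ℚ(√p) has norm N_{ℚ(√p)/ℚ}(ε_p) = -1. -/
/-!
Write the fundamental solution of `x² - p y² = 1` as `x = 2m + 1`, `y = 2z` (possible since
`p ≡ 1 mod 4`), so that `m (m + 1) = p z²` with `m`, `m + 1` coprime. If `p ∣ m`, then `m + 1`
is a square `u²` and `u² - p v² = 1` is a smaller nontrivial solution; hence `p ∣ m + 1`,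
`m = u²`, `m + 1 = p v²`, and `u² - p v² = -1`. Then `u + v√p` is a unit of norm `-1`. Since
`-1` has norm `1` in a field of even degree, the norm of `±εⁿ` is `N(ε)ⁿ`, so `N(ε) = -1`.
-/

open NumberField

theorem Int.exists_eq_sq_of_isCoprime_of_nonneg {a b c : ℤ} (h : IsCoprime a b) (ha : 0 ≤ a)
    (heq : a * b = c ^ 2) : ∃ a₀ : ℤ, a = a₀ ^ 2 := by
  obtain ⟨a₀, rfl | rfl⟩ := Int.sq_of_isCoprime h heq
  · exact ⟨a₀, rfl⟩
  · exact ⟨0, by nlinarith [sq_nonneg a₀]⟩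

theorem Int.exists_eq_sq_and_eq_mul_sq_of_mul_eq_mul_sq {m n c z : ℤ} (hmn : IsCoprime m n)
    (hm : 0 ≤ m) (hn : 0 ≤ n) (hc : 0 < c) (hcn : c ∣ n) (h : m * n = c * z ^ 2) :
    ∃ u v : ℤ, m = u ^ 2 ∧ n = c * v ^ 2 := by
  obtain ⟨k, rfl⟩ := hcn
  have hk : 0 ≤ k := nonneg_of_mul_nonneg_right hn hc
  have hmk : m * k = z ^ 2 := mul_left_cancel₀ hc.ne' (by linear_combination h)
  have hcop : IsCoprime m k := hmn.of_isCoprime_of_dvd_right (dvd_mul_left k c)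
  obtain ⟨u, hu⟩ := Int.exists_eq_sq_of_isCoprime_of_nonneg hcop hm hmk
  obtain ⟨v, hv⟩ := Int.exists_eq_sq_of_isCoprime_of_nonneg hcop.symm hk (by rwa [mul_comm])
  exact ⟨u, v, hu, by rw [hv]⟩

theorem Int.odd_and_even_of_sq_sub_mul_sq_eq_one {d x y : ℤ} (hd : d % 4 = 1)
    (h : x ^ 2 - d * y ^ 2 = 1) : Odd x ∧ Even y := by
  have hmod : ∀ a b : ZMod 4, a ^ 2 - b ^ 2 = 1 →
      (a.cast : ZMod 2) = 1 ∧ (b.cast : ZMod 2) = 0 := by decide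
  have hd4 : (d : ZMod 4) = 1 := by rw [← ZMod.intCast_mod d 4, Nat.cast_ofNat, hd, Int.cast_one]
  have h4 := congrArg (Int.cast : ℤ → ZMod 4) h
  push_cast [hd4, one_mul] at h4
  obtain ⟨hx, hy⟩ := hmod _ _ h4
  rw [ZMod.cast_intCast (by norm_num)] at hx hy
  exact ⟨ZMod.intCast_eq_one_iff_odd.mp hx, ZMod.intCast_eq_zero_iff_even.mp hy⟩

theorem Nat.Prime.exists_sq_sub_mul_sq_eq_neg_one {p : ℕ} (hp : p.Prime) (hp4 : p % 4 = 1) :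
    ∃ x y : ℤ, x ^ 2 - p * y ^ 2 = -1 := by
  have hpZ : _root_.Prime (p : ℤ) := Nat.prime_iff_prime_int.mp hp
  have hp0 : (0 : ℤ) < p := by exact_mod_cast hp.pos
  obtain ⟨a, ha⟩ := Pell.IsFundamental.exists_of_not_isSquare hp0 hpZ.not_isSquare
  obtain ⟨⟨m, hm⟩, ⟨z, hz⟩⟩ :=
    Int.odd_and_even_of_sq_sub_mul_sq_eq_one (by omega) a.prop
  have hm0 : 0 < m := by have := ha.1; omega
  have key : m * (m + 1) = p * z ^ 2 := by
    have := a.prop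
    rw [hm, hz] at this
    exact mul_left_cancel₀ four_ne_zero (by linear_combination this)
  have hcop : IsCoprime m (m + 1) := ⟨-1, 1, by ring⟩
  rcases hpZ.dvd_or_dvd (Dvd.intro _ key.symm) with hdvd | hdvd
  · -- then `m + 1 = u²` with `1 < |u| < x`, against the minimality of the fundamental solution
    obtain ⟨u, v, hu, hv⟩ := Int.exists_eq_sq_and_eq_mul_sq_of_mul_eq_mul_sq hcop.symm
      (by omega) hm0.le hp0 hdvd (by rw [mul_comm, key])
    have hsol : |u| ^ 2 - p * |v| ^ 2 = 1 := by
      rw [sq_abs, sq_abs]; linear_combination -hu + hv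
    have hx := ha.x_le_x (a := .mk |u| |v| hsol) (by
      rw [Pell.Solution₁.x_mk]; nlinarith [sq_abs u, abs_nonneg u])
    rw [Pell.Solution₁.x_mk, hm] at hx
    nlinarith [sq_abs u, pow_le_pow_left₀ (by omega) hx 2]
  · obtain ⟨u, v, hu, hv⟩ := Int.exists_eq_sq_and_eq_mul_sq_of_mul_eq_mul_sq hcop
      hm0.le (by omega) hp0 hdvd key
    exact ⟨u, v, by linear_combination hv - hu⟩

theorem Algebra.norm_add_mul_of_sq_eq {F K : Type*} [Field F] [Field K] [Algebra F K]
    (hK : Module.finrank F K = 2) {d : F} (hd : ¬IsSquare d) {α : K}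
    (hα : α ^ 2 = algebraMap F K d) (a b : F) :
    Algebra.norm F (algebraMap F K a + algebraMap F K b * α) = a ^ 2 - d * b ^ 2 := by
  have hα_notMem : ∀ c : F, algebraMap F K c ≠ α := fun c hc =>
    hd ⟨c, (algebraMap F K).injective (by rw [← hα, ← hc, map_mul, sq])⟩
  have li : LinearIndependent F ![(1 : K), α] := by
    rw [linearIndependent_fin2]
    refine ⟨fun h => hα_notMem 0 (by simpa using h.symm), fun c hc => hα_notMem c⁻¹ ?_⟩
    rw [map_inv₀]
    exact inv_eq_of_mul_eq_one_right (by rwa [← Algebra.smul_def])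
  let B : Module.Basis (Fin 2) F K :=
    basisOfLinearIndependentOfCardEqFinrank li (by simp [hK])
  have hB0 : B 0 = 1 := by simp [B]
  have hB1 : B 1 = α := by simp [B]
  set β := algebraMap F K a + algebraMap F K b * α
  have e0 : β * B 0 = a • B 0 + b • B 1 := by
    rw [hB0, hB1, Algebra.smul_def, Algebra.smul_def]; ring
  have e1 : β * B 1 = (d * b) • B 0 + a • B 1 := by
    rw [hB0, hB1, Algebra.smul_def, Algebra.smul_def, map_mul]
    linear_combination algebraMap F K b * hα
  rw [Algebra.norm_eq_matrix_det B, Matrix.det_fin_two]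
  simp only [Algebra.leftMulMatrix_eq_repr_mul, e0, e1, map_add, map_smul,
    Module.Basis.repr_self, Finsupp.smul_single, smul_eq_mul, mul_one, Finsupp.add_apply,
    Finsupp.single_apply]
  norm_num
  ring

theorem NumberField.exists_unit_norm_eq_neg_one {K : Type*} [Field K] [NumberField K]
    (hK : Module.finrank ℚ K = 2) {d : ℤ} (hd : ¬IsSquare d) {α : K} (hα : α ^ 2 = d)
    {x y : ℤ} (hxy : x ^ 2 - d * y ^ 2 = -1) :
    ∃ u : (𝓞 K)ˣ, Algebra.norm ℚ (u : K) = -1 := by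
  have hα_int : IsIntegral ℤ α := .of_pow two_pos (hα ▸ isIntegral_intCast d)
  set β : 𝓞 K := x + y * ⟨α, hα_int⟩
  have hβ : Algebra.norm ℚ (β : K) = -1 := by
    have hd' : ¬IsSquare (d : ℚ) := by rwa [Rat.isSquare_intCast_iff]
    have := Algebra.norm_add_mul_of_sq_eq hK hd' (by rw [hα, map_intCast]) x y
    simp only [map_intCast] at this
    simp only [β, map_add, map_intCast]
    exact_mod_cast this.trans (by exact_mod_cast hxy)
  have hβ_unit : IsUnit β := isUnit_iff_norm.mpr (by rw [RingOfIntegers.coe_norm, hβ]; norm_num)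
  exact ⟨hβ_unit.unit, hβ⟩

theorem NumberField.Units.norm_eq_neg_one_of_forall_eq_zpow {K : Type*} [Field K]
    [NumberField K] (hK : Even (Module.finrank ℚ K)) {ε : (𝓞 K)ˣ}
    (hε : ∀ u : (𝓞 K)ˣ, ∃ n : ℤ, u = ε ^ n ∨ u = -ε ^ n) {u : (𝓞 K)ˣ}
    (hu : Algebra.norm ℚ (u : K) = -1) : Algebra.norm ℚ (ε : K) = -1 := by
  let N : (𝓞 K)ˣ →* ℚ := ((Algebra.norm ℚ : K →* ℚ).comp
    (algebraMap (𝓞 K) K : 𝓞 K →* K)).comp (Units.coeHom (𝓞 K))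
  have mem_ker (v : (𝓞 K)ˣ) : v ∈ N.ker ↔ Algebra.norm ℚ (v : K) = 1 := MonoidHom.mem_ker
  rcases abs_eq zero_le_one |>.mp (Units.norm K ε) with hε1 | hε1
  · have hε_ker : ε ∈ N.ker := (mem_ker ε).mpr hε1
    have hneg : (-1 : (𝓞 K)ˣ) ∈ N.ker := by
      rw [mem_ker, show ((-1 : (𝓞 K)ˣ) : K) = algebraMap ℚ K (-1) by simp,
        Algebra.norm_algebraMap, hK.neg_one_pow]
    have hu_ker : u ∈ N.ker := by
      obtain ⟨n, rfl | rfl⟩ := hε u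
      · exact zpow_mem hε_ker n
      · rw [neg_eq_neg_one_mul]
        exact mul_mem hneg (zpow_mem hε_ker n)
    norm_num [(mem_ker u).mp hu_ker] at hu
  · exact hε1

/-- If `p ≡ 1 (mod 4)` is prime, then the fundamental unit `ε` of `K = ℚ(√p)`
has norm `N_{K/ℚ}(ε) = -1`. -/
theorem stmt_1 (p : ℕ) (hp : p.Prime) (hp4 : p % 4 = 1)
    (K : Type) [Field K] [NumberField K] (α : K) (hα : α ^ 2 = (p : K))
    (hdeg : Module.finrank ℚ K = 2)
    (ε : (𝓞 K)ˣ)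
    (hfund : ∀ u : (𝓞 K)ˣ, ∃ n : ℤ, u = ε ^ n ∨ u = -ε ^ n) :
    Algebra.norm ℚ (algebraMap (𝓞 K) K (ε : 𝓞 K)) = -1 := by
  obtain ⟨x, y, hxy⟩ := hp.exists_sq_sub_mul_sq_eq_neg_one hp4
  obtain ⟨u, hu⟩ := exists_unit_norm_eq_neg_one hdeg
    (Nat.prime_iff_prime_int.mp hp).not_isSquare (by rw [hα, Int.cast_natCast]) hxy
  exact Units.norm_eq_neg_one_of_forall_eq_zpow (hdeg ▸ even_two) hfund hu
end

section
/- Let p be an odd prime, q a prime which is a primitive root modulo p, n = (p-1)/2, and ζ ∈ F_{q^{p-1}} a primitive p-th root of unity. Then the multiplicative order of ζ + 1 equals p times the multiplicative order of ζ + ζ⁻¹. -/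
/-!
The field has characteristic `q`, and powers of Frobenius preserve multiplicative orders. Since `q`
generates `(ZMod p)ˣ`, some `q ^ k` is `2` mod `p`, and that power of Frobenius maps `ζ + 1` to
`ζ ^ 2 + 1 = ζ * (ζ + ζ⁻¹)`. Since `q ^ ((p - 1) / 2) ≡ -1 (mod p)`, the `(p - 1) / 2`-th power of
Frobenius inverts `ζ` and so fixes `ζ + ζ⁻¹`. The order of `ζ + ζ⁻¹` therefore divides
`q ^ ((p - 1) / 2) - 1 ≡ -2`, which is prime to `p`. So the orders of `ζ` and `ζ + ζ⁻¹` multiply.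
-/
theorem orderOf_pow_expChar_pow {R : Type*} [CommRing R] [IsReduced R] (p k : ℕ) [ExpChar R p]
    (x : R) : orderOf (x ^ p ^ k) = orderOf x :=
  orderOf_injective (iterateFrobenius R p k).toMonoidHom (iterateFrobenius_inj R p k) x

theorem orderOf_dvd_sub_one_of_pow_eq_self {G₀ : Type*} [GroupWithZero G₀] {x : G₀} (hx : x ≠ 0)
    {m : ℕ} (h : x ^ m = x) : orderOf x ∣ m - 1 := by
  apply orderOf_dvd_of_pow_eq_one
  rcases m with _ | m
  · simp
  · rwa [pow_succ, mul_eq_right₀ hx] at h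

namespace IsPrimitiveRoot

theorem pow_div_two_eq_neg_one {R : Type*} [CommRing R] [NoZeroDivisors R] {g : R} {n : ℕ}
    (h : IsPrimitiveRoot g n) (hn : Even n) (hn0 : n ≠ 0) : g ^ (n / 2) = -1 :=
  (h.pow (Nat.pos_of_ne_zero hn0) (Nat.div_mul_cancel hn.two_dvd).symm).eq_neg_one_of_two_right

theorem pow_eq_pow_of_natCast_eq {M : Type*} [CommMonoid M] {ζ : M} {p : ℕ}
    (h : IsPrimitiveRoot ζ p) {a b : ℕ} (hab : (a : ZMod p) = b) : ζ ^ a = ζ ^ b := by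
  rw [← pow_mod_orderOf, ← h.eq_orderOf, (ZMod.natCast_eq_natCast_iff' a b p).mp hab,
    h.eq_orderOf, pow_mod_orderOf]

section Field

variable {K : Type*} [Field K] {p : ℕ} {ζ : K} (hζ : IsPrimitiveRoot ζ p)
include hζ

theorem add_inv_ne_zero (hodd : Odd p) (hp1 : p ≠ 1) : ζ + ζ⁻¹ ≠ 0 := by
  intro h
  have hsq : ζ ^ 2 = -1 := by
    have : ζ * (ζ + ζ⁻¹) = ζ ^ 2 + 1 := by
      rw [mul_add, mul_inv_cancel₀ (hζ.ne_zero hodd.pos.ne'), sq]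
    linear_combination this.symm.trans (by rw [h, mul_zero])
  have h4 : p ∣ 2 ^ 2 :=
    hζ.dvd_of_pow_eq_one _ (by rw [show 2 ^ 2 = 2 * 2 from rfl, pow_mul, hsq]; norm_num)
  exact hp1 ((hodd.coprime_two_right.pow_right 2).eq_one_of_dvd h4)

variable {q : ℕ} [ExpChar K q]

theorem orderOf_add_one_eq_orderOf_mul_add_inv (hp0 : p ≠ 0) {k : ℕ}
    (hk : (q : ZMod p) ^ k = 2) : orderOf (ζ + 1) = orderOf (ζ * (ζ + ζ⁻¹)) := by
  have hfrob : ζ ^ q ^ k = ζ ^ 2 := hζ.pow_eq_pow_of_natCast_eq (by push_cast; exact hk)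
  rw [← orderOf_pow_expChar_pow q k, add_pow_expChar_pow, one_pow, hfrob, mul_add,
    mul_inv_cancel₀ (hζ.ne_zero hp0), sq]

theorem coprime_orderOf_add_inv (hodd : Odd p) (hp1 : p ≠ 1) {n : ℕ}
    (hn : (q : ZMod p) ^ n = -1) : (orderOf (ζ + ζ⁻¹)).Coprime p := by
  have hqn : 1 ≤ q ^ n := Nat.one_le_pow _ _ (expChar_pos K q)
  have hinv : ζ ^ q ^ n = ζ⁻¹ := by
    refine eq_inv_of_mul_eq_one_left ?_
    rw [← pow_succ, hζ.pow_eq_pow_of_natCast_eq (b := 0) (by push_cast; rw [hn]; ring), pow_zero]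
  have hfix : (ζ + ζ⁻¹) ^ q ^ n = ζ + ζ⁻¹ := by
    rw [add_pow_expChar_pow, inv_pow, hinv, inv_inv, add_comm]
  have hdvd := orderOf_dvd_sub_one_of_pow_eq_self (hζ.add_inv_ne_zero hodd hp1) hfix
  have hunit : IsUnit ((q ^ n - 1 : ℕ) : ZMod p) := by
    rw [Nat.cast_sub hqn]
    push_cast
    rw [hn, show (-1 - 1 : ZMod p) = -(2 : ℕ) by push_cast; ring, IsUnit.neg_iff,
      ZMod.isUnit_iff_coprime]
    exact Nat.coprime_two_left.mpr hodd
  exact Nat.Coprime.coprime_dvd_left hdvd ((ZMod.isUnit_iff_coprime _ _).mp hunit)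

end Field

end IsPrimitiveRoot

/-- If `p` is an odd prime, `q` a prime which is a primitive root mod `p`, and
`ζ ∈ F_{q^{p-1}}` a primitive `p`-th root of unity, then
`ord(ζ + 1) = p * ord(ζ + ζ⁻¹)`. -/
theorem stmt_6 (p q : ℕ) (hp : p.Prime) (hodd : Odd p) (hq : q.Prime)
    (hqp : orderOf (q : ZMod p) = p - 1)
    (F : Type) [Field F] [Fintype F] (hF : Fintype.card F = q ^ (p - 1))
    (ζ : F) (hζ : IsPrimitiveRoot ζ p) :
    orderOf (ζ + 1) = p * orderOf (ζ + ζ⁻¹) := by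
  have := Fact.mk hp
  have := Fact.mk hq
  have : CharP F q := charP_of_card_eq_prime_pow hF
  have : NeZero (p - 1) := ⟨Nat.sub_ne_zero_of_lt hp.one_lt⟩
  have hg : IsPrimitiveRoot (q : ZMod p) (p - 1) := hqp ▸ IsPrimitiveRoot.orderOf _
  have h2 : (2 : ZMod p) ≠ 0 :=
    ((ZMod.isUnit_iff_coprime 2 p).mpr (Nat.coprime_two_left.mpr hodd)).ne_zero
  obtain ⟨k, -, hk⟩ := hg.eq_pow_of_pow_eq_one (ZMod.pow_card_sub_one_eq_one h2)
  have hn : (q : ZMod p) ^ ((p - 1) / 2) = -1 :=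
    hg.pow_div_two_eq_neg_one (Nat.Odd.sub_odd hodd odd_one) (NeZero.ne _)
  have hcop := hζ.coprime_orderOf_add_inv hodd hp.one_lt.ne' hn
  rw [hζ.orderOf_add_one_eq_orderOf_mul_add_inv hp.ne_zero hk,
    (Commute.all _ _).orderOf_mul_eq_mul_orderOf_of_coprime (hζ.eq_orderOf ▸ hcop.symm),
    ← hζ.eq_orderOf]
end

section
/- Let p ≡ 1 (mod 8) be prime and ζ_p ∈ ℂ a primitive p-th root of unity. Then ∏_{k=1}^{(p-1)/2} (ζ_p^{k²} + 1) = 1. -/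
/-!
Put `ψ = ZMod.stdAddChar`, so that `ζ ^ (k ^ 2) = ψ (k ^ 2)`. As `k` runs over `1, …, (p - 1) / 2`,
`k ^ 2` runs once over the nonzero squares `Q` of `𝔽_p`, so the product is `∏_{x ∈ S} (x + 1)` with
`S = ψ(Q)`. Since `p ≡ 1 (mod 8)`, `2` is a nonzero square, hence `a ↦ 2a` permutes `Q`, and as
`ψ(a) ^ 2 = ψ(2a)`, squaring permutes `S`. Therefore
`∏ (x - 1) · ∏ (x + 1) = ∏ (x ^ 2 - 1) = ∏ (x - 1)`, and `∏ (x - 1) ≠ 0` because `1 ∉ S`.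
-/

open Finset

theorem Finset.prod_add_one_eq_one_of_image_sq_eq {R : Type*} [CommRing R] [IsDomain R]
    [DecidableEq R] {S : Finset R} (h1 : 1 ∉ S) (hS : S.image (· ^ 2) = S) :
    ∏ x ∈ S, (x + 1) = 1 := by
  have hinj : Set.InjOn (· ^ 2) (S : Set R) := card_image_iff.mp (by rw [hS])
  have hne : ∏ x ∈ S, (x - 1) ≠ 0 :=
    prod_ne_zero_iff.mpr fun x hx => sub_ne_zero.mpr (ne_of_mem_of_not_mem hx h1)
  apply mul_left_cancel₀ hne
  calc (∏ x ∈ S, (x - 1)) * ∏ x ∈ S, (x + 1)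
      = ∏ x ∈ S, (x ^ 2 - 1) := by
        rw [← prod_mul_distrib]
        exact prod_congr rfl fun x _ => by ring
    _ = ∏ y ∈ S.image (· ^ 2), (y - 1) := (prod_image (f := (· - 1)) hinj).symm
    _ = (∏ x ∈ S, (x - 1)) * 1 := by rw [hS, mul_one]

section NonzeroSquares

variable {F : Type*} [Field F] [Fintype F] [DecidableEq F]

variable (F) in
def nonzeroSquares : Finset F := (univ.filter (· ≠ 0)).image (· ^ 2)

theorem mem_nonzeroSquares {a : F} : a ∈ nonzeroSquares F ↔ ∃ b ≠ 0, b ^ 2 = a := by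
  simp [nonzeroSquares]

theorem image_mul_nonzeroSquares {c : F} (hc : c ∈ nonzeroSquares F) :
    (nonzeroSquares F).image (c * ·) = nonzeroSquares F := by
  obtain ⟨d, hd0, rfl⟩ := mem_nonzeroSquares.mp hc
  refine eq_of_subset_of_card_le (fun x hx => ?_) ?_
  · obtain ⟨a, ha, rfl⟩ := mem_image.mp hx
    obtain ⟨b, hb0, rfl⟩ := mem_nonzeroSquares.mp ha
    exact mem_nonzeroSquares.mpr ⟨d * b, mul_ne_zero hd0 hb0, by ring⟩
  · rw [card_image_of_injective _ (mul_right_injective₀ (pow_ne_zero 2 hd0))]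

theorem prod_addChar_add_one_nonzeroSquares {R : Type*} [CommRing R] [IsDomain R]
    {ψ : AddChar F R} (hψ : Function.Injective ψ) (h2 : (2 : F) ∈ nonzeroSquares F) :
    ∏ a ∈ nonzeroSquares F, (ψ a + 1) = 1 := by
  classical
  rw [← prod_image (f := (· + 1)) hψ.injOn]
  apply prod_add_one_eq_one_of_image_sq_eq
  · intro h
    obtain ⟨a, ha, hψa⟩ := mem_image.mp h
    obtain ⟨b, hb0, rfl⟩ := mem_nonzeroSquares.mp ha
    exact pow_ne_zero 2 hb0 (hψ (hψa.trans ψ.map_zero_eq_one.symm))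
  · have hψ2 (a : F) : ψ a ^ 2 = ψ (2 * a) := by rw [two_mul, ψ.map_add_eq_mul, sq]
    conv_rhs => rw [← image_mul_nonzeroSquares h2]
    simp only [image_image, Function.comp_def, hψ2]

end NonzeroSquares

section ZModSquares

variable {p : ℕ} [Fact p.Prime]

theorem injOn_Icc_half_natCast_sq :
    Set.InjOn (fun k : ℕ => (k : ZMod p) ^ 2) (Icc 1 ((p - 1) / 2) : Set ℕ) := by
  intro k hk l hl h
  simp only [coe_Icc, Set.mem_Icc] at hk hl
  rcases sq_eq_sq_iff_eq_or_eq_neg.mp h with h | h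
  · have hmod := (ZMod.natCast_eq_natCast_iff' k l p).mp h
    rwa [Nat.mod_eq_of_lt (by omega), Nat.mod_eq_of_lt (by omega)] at hmod
  · have hdvd : p ∣ k + l := (ZMod.natCast_eq_zero_iff _ p).mp (by push_cast; rw [h]; ring)
    have := Nat.le_of_dvd (by omega) hdvd
    omega

theorem image_Icc_half_natCast_sq (hp2 : p ≠ 2) :
    (Icc 1 ((p - 1) / 2)).image (fun k : ℕ => (k : ZMod p) ^ 2) = nonzeroSquares (ZMod p) := by
  obtain ⟨r, hr⟩ := (Fact.out : p.Prime).odd_of_ne_two hp2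
  ext a
  rw [mem_image, mem_nonzeroSquares]
  constructor
  · rintro ⟨k, hk, rfl⟩
    rw [mem_Icc] at hk
    refine ⟨k, fun h => ?_, rfl⟩
    have := Nat.le_of_dvd (by omega) ((ZMod.natCast_eq_zero_iff k p).mp h)
    omega
  · rintro ⟨b, hb0, rfl⟩
    have hbv0 : b.val ≠ 0 := (ZMod.val_ne_zero b).mpr hb0
    have hbv : b.val < p := ZMod.val_lt b
    by_cases hle : b.val ≤ (p - 1) / 2
    · exact ⟨b.val, mem_Icc.mpr ⟨by omega, hle⟩, by rw [ZMod.natCast_zmod_val]⟩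
    · refine ⟨p - b.val, mem_Icc.mpr ⟨by omega, by omega⟩, ?_⟩
      rw [Nat.cast_sub hbv.le, ZMod.natCast_self, ZMod.natCast_zmod_val]
      ring

end ZModSquares

/-- If `p ≡ 1 (mod 8)` is prime and `ζ_p = exp(2πi/p)`, then
`∏_{k=1}^{(p-1)/2} (ζ_p^{k²} + 1) = 1`. -/
theorem stmt_11 (p : ℕ) (hp : p.Prime) (hp8 : p % 8 = 1)
    (ζ : ℂ) (hζ : ζ = Complex.exp (2 * Real.pi * Complex.I / p)) :
    ∏ k ∈ Finset.Icc 1 ((p - 1) / 2), (ζ ^ (k ^ 2) + 1) = 1 := by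
  have : Fact p.Prime := ⟨hp⟩
  have hp2 : p ≠ 2 := by omega
  have h2 : (2 : ZMod p) ∈ nonzeroSquares (ZMod p) := by
    obtain ⟨c, hc⟩ := (ZMod.exists_sq_eq_two_iff hp2).mpr (Or.inl hp8)
    have h20 : (2 : ZMod p) ≠ 0 := Ring.two_ne_zero (by rwa [ZMod.ringChar_zmod_n])
    exact mem_nonzeroSquares.mpr ⟨c, fun hc0 => h20 (by rw [hc, hc0, mul_zero]), by rw [hc, sq]⟩
  have hζk (k : ℕ) : ζ ^ (k ^ 2) = ZMod.stdAddChar ((k : ZMod p) ^ 2) := by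
    rw [hζ, ← Complex.exp_nat_mul, ← Nat.cast_pow, ZMod.stdAddChar_apply, ZMod.toCircle_natCast]
    push_cast
    ring_nf
  calc ∏ k ∈ Icc 1 ((p - 1) / 2), (ζ ^ (k ^ 2) + 1)
      = ∏ k ∈ Icc 1 ((p - 1) / 2), (ZMod.stdAddChar ((k : ZMod p) ^ 2) + 1) := by
        simp only [hζk]
    _ = ∏ a ∈ nonzeroSquares (ZMod p), (ZMod.stdAddChar a + 1) := by
        rw [← image_Icc_half_natCast_sq hp2, prod_image injOn_Icc_half_natCast_sq]
    _ = 1 := prod_addChar_add_one_nonzeroSquares ZMod.injective_stdAddChar h2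
end
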